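/- arXiv:1009.3258 — 3 statements merged into one kernel-verified Lean document; each statement's English description precedes it below -/
import Mathlib

section
/- There is no bounded function f : 𝔻 → ℝ (twice continuously differentiable) on the open unit disk satisfying ∇²f(z) = 1/(1 - |z|²)² for all z in 𝔻, where ∇² = 4∂∂̄ is the Laplacian. -/
open Complex Metric

/-- The Laplacian `∂²/∂x² + ∂²/∂y²` of a real-valued function on `ℂ ≅ ℝ²`. -/
noncomputable def laplacian (f : ℂ → ℝ) (z : ℂ) : ℝ :=
  iteratedFDeriv ℝ 2 f z ![1, 1] + iteratedFDeriv ℝ 2 f z ![Complex.I, Complex.I]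

/-!
Let `m(r) = ∫₀^{2π} f(r e^{iθ}) dθ`. Differentiating under the integral sign gives
`m(R) - 2π f(0) = ∫₀^R ∫₀^{2π} ∂ᵣf(s e^{iθ}) dθ ds`, and, since the tangential second derivative
integrates to zero over a circle, the flux satisfies the polar form of Green's identity
`∫₀^{2π} R ∂ᵣf(R e^{iθ}) dθ = ∫₀^R s ∫₀^{2π} ∇²f(s e^{iθ}) dθ ds`.
For `∇²f = (1 - |z|²)⁻²` the right-hand side is `π R² / (1 - R²)`, so
`m(R) = 2π f(0) - (π/2) log (1 - R²)`, which is unbounded as `R → 1`, whereas a bound `|f| ≤ M`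
gives `|m(R)| ≤ 2π M`.
-/

open MeasureTheory Set Real

theorem intervalIntegral_integral_swap_of_continuousOn {F : ℝ → ℝ → ℝ} {a b c d : ℝ}
    (hab : a ≤ b) (hcd : c ≤ d) (hF : ContinuousOn (Function.uncurry F) (Icc a b ×ˢ Icc c d)) :
    ∫ x in a..b, ∫ y in c..d, F x y = ∫ y in c..d, ∫ x in a..b, F x y := by
  simp only [intervalIntegral.integral_of_le hab, intervalIntegral.integral_of_le hcd]
  apply integral_integral_swap
  have h : IntegrableOn (Function.uncurry F) (Ioc a b ×ˢ Ioc c d) (volume.prod volume) :=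
    (hF.integrableOn_compact (isCompact_Icc.prod isCompact_Icc)).mono_set
      (prod_mono Ioc_subset_Icc_self Ioc_subset_Icc_self)
  rwa [IntegrableOn, ← Measure.prod_restrict] at h

theorem integral_sub_eq_integral_integral_of_hasDerivAt {G F : ℝ → ℝ → ℝ} {a b c d : ℝ}
    (hab : a ≤ b) (hcd : c ≤ d)
    (hG : ∀ s ∈ Icc a b, ∀ θ ∈ Icc c d, HasDerivAt (G · θ) (F s θ) s)
    (hF : ContinuousOn (Function.uncurry F) (Icc a b ×ˢ Icc c d)) :
    ∫ θ in c..d, (G b θ - G a θ) = ∫ s in a..b, ∫ θ in c..d, F s θ := by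
  rw [intervalIntegral_integral_swap_of_continuousOn hab hcd hF]
  refine intervalIntegral.integral_congr fun θ hθ => ?_
  rw [uIcc_of_le hcd] at hθ
  refine (intervalIntegral.integral_eq_sub_of_hasDerivAt (f := (G · θ)) (fun s hs => ?_) ?_).symm
  · exact hG s (by rwa [uIcc_of_le hab] at hs) θ hθ
  · refine ContinuousOn.intervalIntegrable (hF.comp (continuousOn_id.prodMk continuousOn_const) ?_)
    intro s hs
    exact ⟨by rwa [uIcc_of_le hab] at hs, hθ⟩

theorem ContinuousLinearMap.apply_self_add_apply_mul_I_self {E : Type*} [NormedAddCommGroup E]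
    [NormedSpace ℝ E] (T : ℂ →L[ℝ] ℂ →L[ℝ] E) (w : ℂ) :
    T w w + T (w * I) (w * I) = ‖w‖ ^ 2 • (T 1 1 + T I I) := by
  have hw : w = w.re • (1 : ℂ) + w.im • I := by apply Complex.ext <;> simp
  have hwI : w * I = (-w.im) • (1 : ℂ) + w.re • I := by
    apply Complex.ext <;> simp
  rw [← Complex.normSq_eq_norm_sq, Complex.normSq_apply, hwI]
  set a := w.re
  set b := w.im
  rw [hw]
  simp only [map_add, map_smul, add_apply, smul_apply]
  module

-- With `T = D²f(s u)`, `L = Df(s u)` and `u = e^{iθ}`, the left side is `∂ₛ (Df(s u)(s u))` and the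
-- subtracted bracket is `∂_θ (Df(s u)(i u))`.
theorem ContinuousLinearMap.apply_smul_add_eq_sub_tangential (T : ℂ →L[ℝ] ℂ →L[ℝ] ℝ)
    (L : ℂ →L[ℝ] ℝ) {u : ℂ} (hu : ‖u‖ = 1) (s : ℝ) :
    T u (s • u) + L u = s * (T 1 1 + T I I) - (T (s • u * I) (u * I) + L (u * I * I)) := by
  have hrot := T.apply_self_add_apply_mul_I_self u
  rw [hu, one_pow, one_smul] at hrot
  rw [← hrot, mul_assoc _ I I, I_mul_I, mul_neg_one, smul_mul_assoc, map_neg, map_smul,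
    map_smul, smul_apply, smul_eq_mul, smul_eq_mul]
  ring

theorem laplacian_eq_fderiv_fderiv (f : ℂ → ℝ) (z : ℂ) :
    laplacian f z = fderiv ℝ (fderiv ℝ f) z 1 1 + fderiv ℝ (fderiv ℝ f) z I I := by
  simp [laplacian, iteratedFDeriv_two_apply]

theorem hasDerivAt_circleMap_radius (c : ℂ) (R θ : ℝ) :
    HasDerivAt (fun r => circleMap c r θ) (circleMap 0 1 θ) R := by
  simpa [circleMap] using ((hasDerivAt_id R).ofReal_comp.mul_const (exp (θ * I))).const_add c

theorem circleMap_zero_eq_smul (R θ : ℝ) : circleMap 0 R θ = R • circleMap 0 1 θ := by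
  simp [circleMap, Complex.real_smul]

theorem continuous_circleMap_uncurry (c : ℂ) :
    Continuous (fun p : ℝ × ℝ => circleMap c p.1 p.2) := by
  unfold circleMap; fun_prop

theorem ContinuousOn.continuousOn_comp_circleMap_uncurry {X : Type*} [TopologicalSpace X]
    {g : ℂ → X} {U : Set ℂ} {R : ℝ} (hg : ContinuousOn g U) (hRU : closedBall (0 : ℂ) R ⊆ U) :
    ContinuousOn (fun p : ℝ × ℝ => g (circleMap 0 p.1 p.2)) (Icc 0 R ×ˢ univ) := by
  refine hg.comp (continuous_circleMap_uncurry 0).continuousOn fun p hp => hRU ?_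
  simpa [abs_of_nonneg hp.1.1] using hp.1.2

theorem ContinuousOn.continuous_comp_circleMap {X : Type*} [TopologicalSpace X] {g : ℂ → X}
    {U : Set ℂ} {s : ℝ} (hg : ContinuousOn g U) (hsU : sphere (0 : ℂ) |s| ⊆ U) :
    Continuous (fun θ => g (circleMap 0 s θ)) :=
  hg.comp_continuous (continuous_circleMap 0 s) fun θ => hsU (circleMap_mem_sphere' 0 s θ)

theorem integral_mul_div_one_sub_sq_sq {R : ℝ} (hR0 : 0 ≤ R) (hR1 : R < 1) :
    ∫ s in 0..R, s * (2 * π * (1 / (1 - s ^ 2) ^ 2)) = π / (1 - R ^ 2) - π := by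
  have hpos : ∀ s ∈ uIcc 0 R, 1 - s ^ 2 ≠ 0 := fun s hs => by
    rw [uIcc_of_le hR0] at hs; nlinarith [hs.1, hs.2]
  have hderiv : ∀ s ∈ uIcc 0 R, HasDerivAt (fun s => π / (1 - s ^ 2))
      (s * (2 * π * (1 / (1 - s ^ 2) ^ 2))) s := fun s hs =>
    ((((hasDerivAt_pow 2 s).const_sub 1).inv (hpos s hs)).const_mul π).congr_deriv
      (by field_simp; ring)
  have hcont : ContinuousOn (fun s => s * (2 * π * (1 / (1 - s ^ 2) ^ 2))) (uIcc 0 R) :=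
    continuousOn_id.mul (continuousOn_const.mul (continuousOn_const.div (by fun_prop)
      fun s hs => pow_ne_zero 2 (hpos s hs)))
  rw [intervalIntegral.integral_eq_sub_of_hasDerivAt hderiv hcont.intervalIntegrable]
  simp

theorem integral_mul_div_one_sub_sq {R : ℝ} (hR0 : 0 ≤ R) (hR1 : R < 1) :
    ∫ s in 0..R, π * s / (1 - s ^ 2) = -(π / 2 * Real.log (1 - R ^ 2)) := by
  have hpos : ∀ s ∈ uIcc 0 R, 1 - s ^ 2 ≠ 0 := fun s hs => by
    rw [uIcc_of_le hR0] at hs; nlinarith [hs.1, hs.2]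
  have hderiv : ∀ s ∈ uIcc 0 R, HasDerivAt (fun s => -(π / 2 * Real.log (1 - s ^ 2)))
      (π * s / (1 - s ^ 2)) s := fun s hs =>
    ((((hasDerivAt_pow 2 s).const_sub 1).log (hpos s hs)).const_mul (π / 2)).neg.congr_deriv
      (by field_simp; ring)
  have hcont : ContinuousOn (fun s => π * s / (1 - s ^ 2)) (uIcc 0 R) :=
    (continuousOn_const.mul continuousOn_id).div (by fun_prop) hpos
  rw [intervalIntegral.integral_eq_sub_of_hasDerivAt hderiv hcont.intervalIntegrable]
  simp

section CircleMeans

variable {f : ℂ → ℝ} {U : Set ℂ}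

theorem ContDiffOn.continuousOn_laplacian (hU : IsOpen U) (hf : ContDiffOn ℝ 2 f U) :
    ContinuousOn (laplacian f) U := by
  have hD2 := (hf.fderiv_of_isOpen hU (m := 1) le_rfl).continuousOn_fderiv_of_isOpen hU le_rfl
  rw [funext (laplacian_eq_fderiv_fderiv f)]
  exact (hD2.clm_apply continuousOn_const |>.clm_apply continuousOn_const).add
    (hD2.clm_apply continuousOn_const |>.clm_apply continuousOn_const)

theorem integral_circleMap_sub_eq_integral_integral (hU : IsOpen U) (hf : ContDiffOn ℝ 1 f U)
    {R : ℝ} (hR : 0 ≤ R) (hRU : closedBall (0 : ℂ) R ⊆ U) :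
    ∫ θ in 0..2 * π, (f (circleMap 0 R θ) - f 0) =
      ∫ s in 0..R, ∫ θ in 0..2 * π, fderiv ℝ f (circleMap 0 s θ) (circleMap 0 1 θ) := by
  have hD1 := hf.continuousOn_fderiv_of_isOpen hU le_rfl
  have key := integral_sub_eq_integral_integral_of_hasDerivAt hR two_pi_pos.le
    (G := fun s θ => f (circleMap 0 s θ))
    (F := fun s θ => fderiv ℝ f (circleMap 0 s θ) (circleMap 0 1 θ)) ?_ ?_
  · simpa using key
  · intro s hs θ _
    have hz : circleMap 0 s θ ∈ U := hRU (by simpa [abs_of_nonneg hs.1] using hs.2)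
    exact ((hf.differentiableOn one_ne_zero _ hz).differentiableAt (hU.mem_nhds hz)).hasFDerivAt
      |>.comp_hasDerivAt s (hasDerivAt_circleMap_radius 0 s θ)
  · exact ((hD1.continuousOn_comp_circleMap_uncurry hRU).clm_apply
      ((continuous_circleMap 0 1).comp continuous_snd).continuousOn).mono
      (prod_mono le_rfl (subset_univ _))

theorem integral_deriv_radius_fderiv_circleMap_self (hU : IsOpen U) (hf : ContDiffOn ℝ 2 f U)
    {s : ℝ} (hsU : sphere (0 : ℂ) |s| ⊆ U) :
    ∫ θ in 0..2 * π, (fderiv ℝ (fderiv ℝ f) (circleMap 0 s θ) (circleMap 0 1 θ) (circleMap 0 s θ)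
        + fderiv ℝ f (circleMap 0 s θ) (circleMap 0 1 θ)) =
      s * ∫ θ in 0..2 * π, laplacian f (circleMap 0 s θ) := by
  have hf1 := hf.fderiv_of_isOpen hU (m := 1) le_rfl
  have hmem : ∀ θ, circleMap 0 s θ ∈ U := fun θ => hsU (circleMap_mem_sphere' 0 s θ)
  have hD1 := (hf.continuousOn_fderiv_of_isOpen hU one_le_two).continuous_comp_circleMap hsU
  have hD2 := (hf1.continuousOn_fderiv_of_isOpen hU le_rfl).continuous_comp_circleMap hsU
  have hΔ := (hf.continuousOn_laplacian hU).continuous_comp_circleMap hsU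
  -- `θ ↦ Df(s e^{iθ})(i e^{iθ})` is periodic, so its derivative integrates to zero
  have hP : ∀ θ, HasDerivAt (fun θ => fderiv ℝ f (circleMap 0 s θ) (circleMap 0 1 θ * I))
      (fderiv ℝ (fderiv ℝ f) (circleMap 0 s θ) (circleMap 0 s θ * I) (circleMap 0 1 θ * I)
        + fderiv ℝ f (circleMap 0 s θ) (circleMap 0 1 θ * I * I)) θ := fun θ =>
    ((hf1.differentiableOn one_ne_zero _ (hmem θ)).differentiableAt
      (hU.mem_nhds (hmem θ))).hasFDerivAt.comp_hasDerivAt θ (hasDerivAt_circleMap 0 s θ)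
      |>.clm_apply ((hasDerivAt_circleMap 0 1 θ).mul_const I)
  have hpt : ∀ θ, fderiv ℝ (fderiv ℝ f) (circleMap 0 s θ) (circleMap 0 1 θ) (circleMap 0 s θ)
      + fderiv ℝ f (circleMap 0 s θ) (circleMap 0 1 θ) = s * laplacian f (circleMap 0 s θ) -
      (fderiv ℝ (fderiv ℝ f) (circleMap 0 s θ) (circleMap 0 s θ * I) (circleMap 0 1 θ * I)
        + fderiv ℝ f (circleMap 0 s θ) (circleMap 0 1 θ * I * I)) := fun θ => by
    have h := (fderiv ℝ (fderiv ℝ f) (circleMap 0 s θ)).apply_smul_add_eq_sub_tangential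
      (fderiv ℝ f (circleMap 0 s θ)) (norm_circleMap_zero 1 θ ▸ abs_one) s
    rwa [← circleMap_zero_eq_smul, ← laplacian_eq_fderiv_fderiv] at h
  have hPint : ∫ θ in 0..2 * π,
      (fderiv ℝ (fderiv ℝ f) (circleMap 0 s θ) (circleMap 0 s θ * I) (circleMap 0 1 θ * I)
        + fderiv ℝ f (circleMap 0 s θ) (circleMap 0 1 θ * I * I)) = 0 := by
    rw [intervalIntegral.integral_eq_sub_of_hasDerivAt (fun θ _ => hP θ)
      (Continuous.intervalIntegrable (by fun_prop) _ _)]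
    rw [(periodic_circleMap 0 s).eq, (periodic_circleMap 0 1).eq, sub_self]
  rw [intervalIntegral.integral_congr fun θ _ => hpt θ, intervalIntegral.integral_sub
    ((hΔ.intervalIntegrable _ _).const_mul s) (Continuous.intervalIntegrable (by fun_prop) _ _),
    hPint, sub_zero, intervalIntegral.integral_const_mul]

theorem integral_fderiv_circleMap_self (hU : IsOpen U) (hf : ContDiffOn ℝ 2 f U) {R : ℝ}
    (hR : 0 ≤ R) (hRU : closedBall (0 : ℂ) R ⊆ U) :
    ∫ θ in 0..2 * π, fderiv ℝ f (circleMap 0 R θ) (circleMap 0 R θ) =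
      ∫ s in 0..R, s * ∫ θ in 0..2 * π, laplacian f (circleMap 0 s θ) := by
  have hf1 := hf.fderiv_of_isOpen hU (m := 1) le_rfl
  have hD1 := (hf.continuousOn_fderiv_of_isOpen hU one_le_two).continuousOn_comp_circleMap_uncurry
    hRU
  have hD2 := (hf1.continuousOn_fderiv_of_isOpen hU le_rfl).continuousOn_comp_circleMap_uncurry
    hRU
  have hu : Continuous fun p : ℝ × ℝ => circleMap 0 1 p.2 :=
    (continuous_circleMap 0 1).comp continuous_snd
  have key := integral_sub_eq_integral_integral_of_hasDerivAt hR two_pi_pos.le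
    (G := fun s θ => fderiv ℝ f (circleMap 0 s θ) (circleMap 0 s θ))
    (F := fun s θ => fderiv ℝ (fderiv ℝ f) (circleMap 0 s θ) (circleMap 0 1 θ) (circleMap 0 s θ)
      + fderiv ℝ f (circleMap 0 s θ) (circleMap 0 1 θ)) ?_ ?_
  · simp only [circleMap_zero_radius, Function.const_apply, map_zero, sub_zero] at key
    rw [key]
    refine intervalIntegral.integral_congr fun s hs => ?_
    rw [uIcc_of_le hR] at hs
    refine integral_deriv_radius_fderiv_circleMap_self hU hf (sphere_subset_closedBall.trans
      ((closedBall_subset_closedBall ?_).trans hRU))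
    rw [abs_of_nonneg hs.1]
    exact hs.2
  · intro s hs θ _
    have hz : circleMap 0 s θ ∈ U := hRU (by simpa [abs_of_nonneg hs.1] using hs.2)
    have hD : HasDerivAt (fun r => fderiv ℝ f (circleMap 0 r θ))
        (fderiv ℝ (fderiv ℝ f) (circleMap 0 s θ) (circleMap 0 1 θ)) s :=
      ((hf1.differentiableOn one_ne_zero _ hz).differentiableAt
        (hU.mem_nhds hz)).hasFDerivAt.comp_hasDerivAt s (hasDerivAt_circleMap_radius 0 s θ)
    exact hD.clm_apply (hasDerivAt_circleMap_radius 0 s θ)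
  · exact (((hD2.clm_apply hu.continuousOn).clm_apply
      (continuous_circleMap_uncurry 0).continuousOn).add (hD1.clm_apply hu.continuousOn)).mono
      (prod_mono le_rfl (subset_univ _))

theorem integral_fderiv_circleMap_of_laplacian_eq (hf : ContDiffOn ℝ 2 f (ball (0 : ℂ) 1))
    (hlap : ∀ z ∈ ball (0 : ℂ) 1, laplacian f z = 1 / (1 - ‖z‖ ^ 2) ^ 2) {s : ℝ}
    (hs0 : 0 < s) (hs1 : s < 1) :
    ∫ θ in 0..2 * π, fderiv ℝ f (circleMap 0 s θ) (circleMap 0 1 θ) = π * s / (1 - s ^ 2) := by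
  have hflux := integral_fderiv_circleMap_self isOpen_ball hf hs0.le (closedBall_subset_ball hs1)
  have hradial : ∀ θ, fderiv ℝ f (circleMap 0 s θ) (circleMap 0 s θ) =
      s * fderiv ℝ f (circleMap 0 s θ) (circleMap 0 1 θ) := fun θ => by
    nth_rewrite 2 [circleMap_zero_eq_smul s θ]
    rw [map_smul, smul_eq_mul]
  have hmean : ∀ t ∈ uIcc 0 s, t * ∫ θ in 0..2 * π, laplacian f (circleMap 0 t θ) =
      t * (2 * π * (1 / (1 - t ^ 2) ^ 2)) := fun t ht => by
    rw [uIcc_of_le hs0.le] at ht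
    have hmem : ∀ θ, circleMap 0 t θ ∈ ball (0 : ℂ) 1 := fun θ => by
      rw [mem_ball_zero_iff, norm_circleMap_zero, abs_of_nonneg ht.1]
      exact ht.2.trans_lt hs1
    rw [intervalIntegral.integral_congr fun θ _ => hlap _ (hmem θ)]
    simp
  rw [intervalIntegral.integral_congr fun θ _ => hradial θ, intervalIntegral.integral_const_mul,
    intervalIntegral.integral_congr hmean, integral_mul_div_one_sub_sq_sq hs0.le hs1] at hflux
  have hpos : 1 - s ^ 2 ≠ 0 := by nlinarith
  rw [eq_div_iff hpos]
  refine mul_left_cancel₀ hs0.ne' ?_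
  rw [← mul_assoc, hflux]
  field_simp
  ring

theorem integral_circleMap_of_laplacian_eq (hf : ContDiffOn ℝ 2 f (ball (0 : ℂ) 1))
    (hlap : ∀ z ∈ ball (0 : ℂ) 1, laplacian f z = 1 / (1 - ‖z‖ ^ 2) ^ 2) {R : ℝ}
    (hR0 : 0 ≤ R) (hR1 : R < 1) :
    ∫ θ in 0..2 * π, f (circleMap 0 R θ) = 2 * π * f 0 - π / 2 * Real.log (1 - R ^ 2) := by
  have hmean := integral_circleMap_sub_eq_integral_integral isOpen_ball (hf.of_le one_le_two) hR0
    (closedBall_subset_ball hR1)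
  have hcont := hf.continuousOn.continuous_comp_circleMap (s := R)
    (sphere_subset_closedBall.trans (by simpa [abs_of_nonneg hR0] using closedBall_subset_ball hR1))
  have hradial : ∫ s in 0..R, ∫ θ in 0..2 * π, fderiv ℝ f (circleMap 0 s θ) (circleMap 0 1 θ) =
      ∫ s in 0..R, π * s / (1 - s ^ 2) := by
    refine intervalIntegral.integral_congr_ae (Filter.Eventually.of_forall fun s hs => ?_)
    rw [uIoc_of_le hR0] at hs
    exact integral_fderiv_circleMap_of_laplacian_eq hf hlap hs.1 (hs.2.trans_lt hR1)
  rw [intervalIntegral.integral_sub (hcont.intervalIntegrable _ _) intervalIntegrable_const,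
    intervalIntegral.integral_const, smul_eq_mul, sub_zero, hradial,
    integral_mul_div_one_sub_sq hR0 hR1] at hmean
  linarith

end CircleMeans

/-- There is no bounded C² function on the open unit disk whose Laplacian is
`1/(1-|z|²)²`. -/
theorem no_bounded_with_laplacian_eq :
    ¬ ∃ f : ℂ → ℝ, ContDiffOn ℝ 2 f (ball (0 : ℂ) 1) ∧
      (∃ M : ℝ, ∀ z ∈ ball (0 : ℂ) 1, |f z| ≤ M) ∧
      (∀ z ∈ ball (0 : ℂ) 1, laplacian f z = 1 / (1 - ‖z‖ ^ 2) ^ 2) := by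
  rintro ⟨f, hf, ⟨M, hM⟩, hlap⟩
  have hf0 := abs_le.mp (hM 0 (mem_ball_self one_pos))
  set K := 8 * M + 1
  have hK : 0 < K := by linarith
  -- the radius at which `-log (1 - R ^ 2) = K`
  set R := √(1 - Real.exp (-K))
  have hR2 : R ^ 2 = 1 - Real.exp (-K) :=
    Real.sq_sqrt (sub_nonneg.mpr (Real.exp_le_one_iff.mpr (by linarith)))
  have hR1 : R < 1 := by nlinarith [Real.exp_pos (-K), Real.sqrt_nonneg (1 - Real.exp (-K))]
  have hmean := integral_circleMap_of_laplacian_eq hf hlap (Real.sqrt_nonneg _) hR1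
  rw [hR2, sub_sub_cancel, Real.log_exp] at hmean
  have hbound : ‖∫ θ in 0..2 * π, f (circleMap 0 R θ)‖ ≤ M * |2 * π - 0| := by
    refine intervalIntegral.norm_integral_le_of_norm_le_const fun θ _ => hM _ ?_
    rw [mem_ball_zero_iff, norm_circleMap_zero, abs_of_nonneg (Real.sqrt_nonneg _)]
    exact hR1
  rw [hmean, Real.norm_eq_abs, sub_zero, abs_of_pos two_pi_pos] at hbound
  nlinarith [(abs_le.mp hbound).2, pi_pos]
end

section
/- For any α > -1 and β > -1 with α ≠ β, there is no bounded C² function u on the open unit disk with ∇²u(z) = (β - α)/(1 - |z|²)² for all z ∈ 𝔻. -/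
/-!
Put `c = β - α` and, replacing `u` by `-u` if necessary, assume `c > 0`. In the plane
`Δ log (1 - |z|²) = -4 / (1 - |z|²)²`, so `w = u + (c / 8) log (1 - |z|²)` satisfies
`Δ w ≥ c / (2 (1 - |z|²)²) > 0` on the disk. Since `u` is bounded above, `w → -∞` at the unit
circle, so `w` has an interior local maximum; there every second directional derivative of `w`
is `≤ 0`, hence `Δ w ≤ 0`, a contradiction.
-/

open Complex Metric

section

open Filter Topology InnerProductSpace Laplacian

theorem IsLocalMax.nonpos_of_hasDerivAt_deriv {g g' : ℝ → ℝ} {g'' a : ℝ} (hmax : IsLocalMax g a)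
    (hg : ∀ᶠ t in 𝓝 a, HasDerivAt g (g' t) t) (hg' : HasDerivAt g' g'' a) : g'' ≤ 0 := by
  by_contra! hpos
  have hderiv : deriv g =ᶠ[𝓝 a] g' := hg.mono fun t ht => ht.deriv
  -- by the second-derivative test `a` would also be a local minimum, so `g` is locally constant
  have hmin : IsLocalMin g a :=
    isLocalMin_of_deriv_deriv_pos (by rwa [(hg'.congr_of_eventuallyEq hderiv).deriv])
      hmax.deriv_eq_zero hg.self_of_nhds.continuousAt
  have hconst : g =ᶠ[𝓝 a] fun _ => g a := (hmax.and hmin).mono fun t ht => le_antisymm ht.1 ht.2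
  have hderiv_zero : deriv g =ᶠ[𝓝 a] fun _ => 0 :=
    hconst.eventuallyEq_nhds.mono fun t ht => ht.deriv_eq.trans (deriv_const t _)
  have hg''_eq := (hg'.congr_of_eventuallyEq hderiv).deriv
  rw [hderiv_zero.deriv_eq, deriv_const] at hg''_eq
  linarith

section Line

variable {E F : Type*} [NormedAddCommGroup E] [NormedSpace ℝ E] [NormedAddCommGroup F]
  [NormedSpace ℝ F] {f : E → F} {x v : E}

theorem hasDerivAt_add_smul (x v : E) (t : ℝ) : HasDerivAt (fun t : ℝ => x + t • v) v t := by
  simpa using ((hasDerivAt_id t).smul_const v).const_add x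

theorem ContDiffAt.eventually_hasDerivAt_comp_add_smul (hf : ContDiffAt ℝ 2 f x) (v : E) :
    ∀ᶠ t in 𝓝 (0 : ℝ), HasDerivAt (fun t : ℝ => f (x + t • v)) (fderiv ℝ f (x + t • v) v) t := by
  have hline : Tendsto (fun t : ℝ => x + t • v) (𝓝 0) (𝓝 x) := by
    simpa using (hasDerivAt_add_smul x v 0).continuousAt.tendsto
  filter_upwards [hline.eventually (hf.eventually (by norm_num))] with t ht
  exact (ht.differentiableAt two_ne_zero).hasFDerivAt.comp_hasDerivAt t (hasDerivAt_add_smul x v t)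

theorem ContDiffAt.hasDerivAt_fderiv_comp_add_smul (hf : ContDiffAt ℝ 2 f x) (v : E) :
    HasDerivAt (fun t : ℝ => fderiv ℝ f (x + t • v) v) (fderiv ℝ (fderiv ℝ f) x v v) 0 := by
  have hf' : HasFDerivAt (fderiv ℝ f) (fderiv ℝ (fderiv ℝ f) x) (x + (0 : ℝ) • v) := by
    rw [zero_smul, add_zero]
    exact ((hf.fderiv_right (m := 1) (by norm_num)).differentiableAt one_ne_zero).hasFDerivAt
  exact (ContinuousLinearMap.apply ℝ F v).hasFDerivAt.comp_hasDerivAt 0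
    (hf'.comp_hasDerivAt 0 (hasDerivAt_add_smul x v 0))

theorem ContDiffAt.fderiv_fderiv_apply_self_eq {g : ℝ → F} {g'' : F} (hf : ContDiffAt ℝ 2 f x)
    (hg : ∀ᶠ t in 𝓝 (0 : ℝ), HasDerivAt (fun t : ℝ => f (x + t • v)) (g t) t)
    (hg' : HasDerivAt g g'' 0) : fderiv ℝ (fderiv ℝ f) x v v = g'' := by
  have heq : (fun t : ℝ => fderiv ℝ f (x + t • v) v) =ᶠ[𝓝 0] g :=
    (hf.eventually_hasDerivAt_comp_add_smul v).and hg |>.mono fun t ht => ht.1.unique ht.2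
  exact (hf.hasDerivAt_fderiv_comp_add_smul v).unique (hg'.congr_of_eventuallyEq heq)

theorem IsLocalMax.fderiv_fderiv_apply_self_nonpos {f : E → ℝ} (hmax : IsLocalMax f x)
    (hf : ContDiffAt ℝ 2 f x) (v : E) : fderiv ℝ (fderiv ℝ f) x v v ≤ 0 := by
  have hmax' : IsLocalMax (fun t : ℝ => f (x + t • v)) 0 :=
    IsLocalMax.comp_continuous (by simpa using hmax) (hasDerivAt_add_smul x v 0).continuousAt
  exact hmax'.nonpos_of_hasDerivAt_deriv (hf.eventually_hasDerivAt_comp_add_smul v)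
    (hf.hasDerivAt_fderiv_comp_add_smul v)

end Line

theorem IsLocalMax.laplacian_nonpos {E : Type*} [NormedAddCommGroup E] [InnerProductSpace ℝ E]
    [FiniteDimensional ℝ E] {f : E → ℝ} {x : E} (hmax : IsLocalMax f x)
    (hf : ContDiffAt ℝ 2 f x) : Δ f x ≤ 0 := by
  rw [laplacian_eq_iteratedFDeriv_stdOrthonormalBasis]
  exact Finset.sum_nonpos fun i _ => by
    simpa [iteratedFDeriv_two_apply] using hmax.fderiv_fderiv_apply_self_nonpos hf _

theorem laplacian_eq_laplacian (f : ℂ → ℝ) : _root_.laplacian f = Δ f := by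
  rw [laplacian_eq_iteratedFDeriv_complexPlane]
  rfl

theorem one_sub_norm_sq_pos {E : Type*} [SeminormedAddCommGroup E] {x : E} (hx : ‖x‖ < 1) :
    0 < 1 - ‖x‖ ^ 2 :=
  sub_pos.2 (pow_lt_one₀ (norm_nonneg x) hx two_ne_zero)

section Barrier

variable {E : Type*} [NormedAddCommGroup E] [InnerProductSpace ℝ E] {x : E}

theorem contDiffAt_log_one_sub_norm_sq (hx : ‖x‖ < 1) :
    ContDiffAt ℝ 2 (fun y : E => Real.log (1 - ‖y‖ ^ 2)) x :=
  (contDiffAt_const.sub (contDiff_norm_sq ℝ).contDiffAt).log (one_sub_norm_sq_pos hx).ne'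

theorem fderiv_fderiv_log_one_sub_norm_sq_apply_self (hx : ‖x‖ < 1) (v : E) :
    fderiv ℝ (fderiv ℝ fun y : E => Real.log (1 - ‖y‖ ^ 2)) x v v =
      -2 * ‖v‖ ^ 2 / (1 - ‖x‖ ^ 2) - 4 * inner ℝ x v ^ 2 / (1 - ‖x‖ ^ 2) ^ 2 := by
  have hD := (one_sub_norm_sq_pos hx).ne'
  have hnorm (t : ℝ) : HasDerivAt (fun t : ℝ => 1 - ‖x + t • v‖ ^ 2)
      (-(2 * inner ℝ (x + t • v) v)) t :=
    ((hasDerivAt_add_smul x v t).norm_sq).const_sub 1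
  have hline : ∀ᶠ t in 𝓝 (0 : ℝ), 1 - ‖x + t • v‖ ^ 2 ≠ 0 :=
    (hnorm 0).continuousAt.eventually_ne (by simpa using hD)
  apply (contDiffAt_log_one_sub_norm_sq hx).fderiv_fderiv_apply_self_eq
    (hline.mono fun t ht => (hnorm t).log ht)
  have hinner : HasDerivAt (fun t : ℝ => -(2 * inner ℝ (x + t • v) v)) (-(2 * ‖v‖ ^ 2)) 0 := by
    simpa [real_inner_self_eq_norm_sq] using
      (((hasDerivAt_add_smul x v 0).inner ℝ (hasDerivAt_const 0 v)).const_mul 2).fun_neg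
  refine (hinner.fun_div (hnorm 0) (by simpa using hD)).congr_deriv ?_
  simp only [zero_smul, add_zero]
  field_simp
  ring

end Barrier

theorem laplacian_log_one_sub_norm_sq {z : ℂ} (hz : ‖z‖ < 1) :
    Δ (fun z : ℂ => Real.log (1 - ‖z‖ ^ 2)) z = -4 / (1 - ‖z‖ ^ 2) ^ 2 := by
  have hD := (one_sub_norm_sq_pos hz).ne'
  have hsq : ‖z‖ ^ 2 = z.re ^ 2 + z.im ^ 2 := by
    rw [← Complex.normSq_eq_norm_sq, Complex.normSq_apply]
    ring
  rw [laplacian_eq_iteratedFDeriv_complexPlane]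
  simp only [iteratedFDeriv_two_apply, Matrix.cons_val_zero, Matrix.cons_val_one,
    fderiv_fderiv_log_one_sub_norm_sq_apply_self hz, Complex.inner, one_mul, Complex.I_mul_re,
    Complex.conj_im, neg_neg, norm_one, Complex.norm_I, Complex.conj_re]
  field_simp
  rw [hsq]
  ring

section LocalMax

variable {E : Type*} [NormedAddCommGroup E] [ProperSpace E] {w : E → ℝ}

theorem exists_isLocalMax_of_lt_on_sphere {a : E} {r : ℝ} (hr : 0 ≤ r)
    (hw : ContinuousOn w (closedBall a r)) (hlt : ∀ z ∈ sphere a r, w z < w a) :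
    ∃ z ∈ ball a r, IsLocalMax w z := by
  obtain ⟨z, hz, hmax⟩ :=
    (isCompact_closedBall a r).exists_isMaxOn ⟨a, mem_closedBall_self hr⟩ hw
  have hz_ball : z ∈ ball a r := by
    rcases (mem_closedBall.1 hz).lt_or_eq with h | h
    · exact h
    · exact absurd (hmax (mem_closedBall_self hr)) (not_le.2 (hlt z h))
  exact ⟨z, hz_ball,
    hmax.isLocalMax (mem_of_superset (isOpen_ball.mem_nhds hz_ball) ball_subset_closedBall)⟩

theorem exists_isLocalMax_of_le_add_log_one_sub_norm_sq {M k : ℝ} (hk : 0 < k)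
    (hw : ContinuousOn w (ball 0 1))
    (hle : ∀ z ∈ ball (0 : E) 1, w z ≤ M + k * Real.log (1 - ‖z‖ ^ 2)) :
    ∃ z ∈ ball (0 : E) 1, IsLocalMax w z := by
  have hw0 : w 0 ≤ M := by simpa using hle 0 (mem_ball_self one_pos)
  -- on the sphere where `1 - ‖z‖ ^ 2 = t`, the bound gives `w z ≤ w 0 - k * log 2`
  set t := Real.exp ((w 0 - M) / k) / 2 with ht
  have ht_pos : 0 < t := by positivity
  have ht_lt : t < 1 := by
    have : Real.exp ((w 0 - M) / k) ≤ 1 :=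
      Real.exp_le_one_iff.2 (div_nonpos_of_nonpos_of_nonneg (by linarith) hk.le)
    linarith
  have hr : Real.sqrt (1 - t) < 1 := by
    rw [Real.sqrt_lt' one_pos]
    linarith
  obtain ⟨z, hz, hmax⟩ := exists_isLocalMax_of_lt_on_sphere (Real.sqrt_nonneg _)
    (hw.mono (closedBall_subset_ball hr)) fun z hz => by
      have hz_norm : ‖z‖ ^ 2 = 1 - t := by
        rw [mem_sphere_zero_iff_norm.1 hz, Real.sq_sqrt (by linarith)]
      calc w z ≤ M + k * Real.log t := by
            simpa [hz_norm] using
              hle z (sphere_subset_closedBall.trans (closedBall_subset_ball hr) hz)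
        _ = w 0 - k * Real.log 2 := by
            rw [ht, Real.log_div (Real.exp_ne_zero _) two_ne_zero, Real.log_exp]
            field_simp
            ring
        _ < w 0 := by nlinarith [Real.log_pos one_lt_two]
  exact ⟨z, ball_subset_ball hr.le hz, hmax⟩

end LocalMax

theorem exists_laplacian_lt_of_bddAbove {u : ℂ → ℝ} {c : ℝ} (hu : ContDiffOn ℝ 2 u (ball 0 1))
    (hbdd : BddAbove (u '' ball 0 1)) (hc : 0 < c) :
    ∃ z ∈ ball (0 : ℂ) 1, Δ u z < c / (1 - ‖z‖ ^ 2) ^ 2 := by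
  by_contra! hlap
  obtain ⟨M, hM⟩ := hbdd
  set φ : ℂ → ℝ := fun z => Real.log (1 - ‖z‖ ^ 2)
  have hφ : ContDiffOn ℝ 2 φ (ball 0 1) := fun z hz =>
    (contDiffAt_log_one_sub_norm_sq (mem_ball_zero_iff.1 hz)).contDiffWithinAt
  set w := u + (c / 8) • φ
  have hw : ContDiffOn ℝ 2 w (ball 0 1) := hu.add (hφ.const_smul (c / 8))
  obtain ⟨z, hz, hmax⟩ := exists_isLocalMax_of_le_add_log_one_sub_norm_sq
    (by positivity : 0 < c / 8) hw.continuousOn fun z hz =>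
      by simpa [w, φ] using hM (Set.mem_image_of_mem u hz)
  have hu_z := hu.contDiffAt (isOpen_ball.mem_nhds hz)
  have hφ_z := hφ.contDiffAt (isOpen_ball.mem_nhds hz)
  have hw_z : Δ w z = Δ u z + c / 8 * (-4 / (1 - ‖z‖ ^ 2) ^ 2) := by
    rw [hu_z.laplacian_add (f₂ := (c / 8) • φ) (hφ_z.const_smul (c / 8)), laplacian_smul _ hφ_z,
      laplacian_log_one_sub_norm_sq (mem_ball_zero_iff.1 hz)]
    rfl
  have hnonpos := hmax.laplacian_nonpos (hw.contDiffAt (isOpen_ball.mem_nhds hz))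
  have hpos : 0 < c / (1 - ‖z‖ ^ 2) ^ 2 :=
    div_pos hc (pow_pos (one_sub_norm_sq_pos (mem_ball_zero_iff.1 hz)) 2)
  have hbarrier : c / 8 * (-4 / (1 - ‖z‖ ^ 2) ^ 2) = -(c / (1 - ‖z‖ ^ 2) ^ 2) / 2 := by ring
  linarith [hlap z hz]

end

theorem no_bounded_with_laplacian_diff_general (α β : ℝ) (hne : α ≠ β) :
    ¬ ∃ u : ℂ → ℝ, ContDiffOn ℝ 2 u (ball (0 : ℂ) 1) ∧
      (∃ M : ℝ, ∀ z ∈ ball (0 : ℂ) 1, |u z| ≤ M) ∧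
      (∀ z ∈ ball (0 : ℂ) 1, laplacian u z = (β - α) / (1 - ‖z‖ ^ 2) ^ 2) := by
  rintro ⟨u, hu, ⟨M, hM⟩, hlap⟩
  simp only [laplacian_eq_laplacian] at hlap
  rcases (sub_ne_zero.2 hne.symm).lt_or_gt with hc | hc
  · have hbdd : BddAbove ((-u) '' ball 0 1) :=
      ⟨M, Set.forall_mem_image.2 fun z hz => (neg_le_abs _).trans (hM z hz)⟩
    obtain ⟨z, hz, hlt⟩ := exists_laplacian_lt_of_bddAbove (u := -u) hu.neg hbdd (neg_pos.2 hc)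
    rw [InnerProductSpace.laplacian_neg, Pi.neg_apply, hlap z hz, neg_div] at hlt
    exact lt_irrefl _ hlt
  · have hbdd : BddAbove (u '' ball 0 1) :=
      ⟨M, Set.forall_mem_image.2 fun z hz => (le_abs_self _).trans (hM z hz)⟩
    obtain ⟨z, hz, hlt⟩ := exists_laplacian_lt_of_bddAbove hu hbdd hc
    rw [hlap z hz] at hlt
    exact lt_irrefl _ hlt

/-- For `α, β > -1` with `α ≠ β` there is no bounded C² function `u` on the disk
with `∇²u(z) = (β-α)/(1-|z|²)²`. -/
theorem no_bounded_with_laplacian_diff (α β : ℝ) (hα : -1 < α) (hβ : -1 < β)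
    (hne : α ≠ β) :
    ¬ ∃ u : ℂ → ℝ, ContDiffOn ℝ 2 u (ball (0 : ℂ) 1) ∧
      (∃ M : ℝ, ∀ z ∈ ball (0 : ℂ) 1, |u z| ≤ M) ∧
      (∀ z ∈ ball (0 : ℂ) 1, laplacian u z = (β - α) / (1 - ‖z‖ ^ 2) ^ 2) :=
  no_bounded_with_laplacian_diff_general α β hne
end

section
/- There is no pair of corona-condition pairs {θ₁,θ₂}, {φ₁,φ₂} in H^∞(𝔻) and α > -1 such that (1+α)/(1-|w|²)² = (1/4)∇² log((|φ₁(w)|²+|φ₂(w)|²)/(|θ₁(w)|²+|θ₂(w)|²)) for all w ∈ 𝔻. -/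
open Complex Metric

/-!
With `W = φ₁ φ₂' - φ₁' φ₂`, a direct computation together with Lagrange's identity gives
`Δ log (|φ₁|² + |φ₂|²) = 4 |W|² / (|φ₁|² + |φ₂|²)²`, and likewise for `θ`. Dropping the
(nonpositive) `θ`-term and using the corona bound for `φ`, the hypothesis forces
`|W w| (1 - |w|²) ≥ εφ √(1 + α) > 0` on the disk. Then `1 / W` is holomorphic on the disk and
tends to `0` at its boundary, which the maximum modulus principle rules out.
-/

open Filter Topology
open scoped ComplexConjugate Laplacian

theorem laplacian_eq_laplacian_innerProductSpace (f : ℂ → ℝ) : laplacian f = Δ f := by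
  rw [InnerProductSpace.laplacian_eq_iteratedFDeriv_complexPlane]; rfl

theorem laplacian_log_div {u v : ℂ → ℝ} {w : ℂ} (hu : ContDiffAt ℝ 2 u w)
    (hv : ContDiffAt ℝ 2 v w) (hu0 : u w ≠ 0) (hv0 : v w ≠ 0) :
    laplacian (fun z => Real.log (u z / v z)) w
      = laplacian (fun z => Real.log (u z)) w - laplacian (fun z => Real.log (v z)) w := by
  have hlog : (fun z => Real.log (u z / v z))
      =ᶠ[𝓝 w] (fun z => Real.log (u z)) - fun z => Real.log (v z) := by
    filter_upwards [hu.continuousAt.eventually_ne hu0, hv.continuousAt.eventually_ne hv0]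
      with z hu hv
    exact Real.log_div hu hv
  simp only [laplacian_eq_laplacian_innerProductSpace,
    (InnerProductSpace.laplacian_congr_nhds hlog).eq_of_nhds,
    (hu.log hu0).laplacian_sub (hv.log hv0)]

noncomputable def reMulCLM : ℂ →L[ℝ] ℂ →L[ℝ] ℝ :=
  (ContinuousLinearMap.compL ℝ ℂ ℂ ℝ reCLM).comp (ContinuousLinearMap.mul ℝ ℂ)

@[simp] theorem reMulCLM_apply (c v : ℂ) : reMulCLM c v = (c * v).re := rfl

/- If `df = Re (B dz)` then `B = 2 ∂f/∂z`, and `Δ f = 4 ∂_z̄ ∂_z f = Re ∂_x B - Im ∂_y B`. -/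
theorem laplacian_eq_of_hasFDerivAt {f : ℂ → ℝ} {B : ℂ → ℂ} {B' : ℂ →L[ℝ] ℂ} {w : ℂ}
    (hf : ∀ᶠ z in 𝓝 w, HasFDerivAt f (reMulCLM (B z)) z) (hB : HasFDerivAt B B' w) :
    laplacian f w = (B' 1).re - (B' I).im := by
  have hf' : fderiv ℝ f =ᶠ[𝓝 w] fun z => reMulCLM (B z) := hf.mono fun z hz => hz.fderiv
  have h2 : fderiv ℝ (fderiv ℝ f) w = reMulCLM.comp B' := by
    rw [hf'.fderiv_eq]; exact (reMulCLM.hasFDerivAt.comp w hB).fderiv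
  simp [laplacian, iteratedFDeriv_two_apply, h2, sub_eq_add_neg]

theorem HasDerivAt.hasFDerivAt_normSq {f : ℂ → ℂ} {d z : ℂ} (hf : HasDerivAt f d z) :
    HasFDerivAt (fun z => normSq (f z)) (reMulCLM (2 * (conj (f z) * d))) z := by
  have h := (hf.hasFDerivAt.restrictScalars ℝ).norm_sq
  simp only [← Complex.sq_norm]
  refine h.congr_fderiv (ContinuousLinearMap.ext fun v => ?_)
  simp
  ring

theorem HasDerivAt.hasFDerivAt_conj_mul {f g : ℂ → ℂ} {d e z : ℂ} (hf : HasDerivAt f d z)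
    (hg : HasDerivAt g e z) :
    ∃ L : ℂ →L[ℝ] ℂ, HasFDerivAt (fun z => conj (f z) * g z) L z ∧
      ∀ v, L v = conj (d * v) * g z + conj (f z) * (e * v) := by
  have hc : HasFDerivAt (fun z => conj (f z)) ((conjCLE : ℂ →L[ℝ] ℂ).comp
      (((1 : ℂ →L[ℂ] ℂ).smulRight d).restrictScalars ℝ)) z :=
    (conjCLE : ℂ →L[ℝ] ℂ).hasFDerivAt.comp z (hf.hasFDerivAt.restrictScalars ℝ)
  refine ⟨_, hc.mul' (hg.hasFDerivAt.restrictScalars ℝ), fun v => ?_⟩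
  simp
  ring

noncomputable def wronskian (f₁ f₂ : ℂ → ℂ) (z : ℂ) : ℂ :=
  f₁ z * deriv f₂ z - deriv f₁ z * f₂ z

theorem normSq_mul_sub_mul (a b d₁ d₂ : ℂ) :
    normSq (a * d₂ - d₁ * b) = (normSq d₁ + normSq d₂) * (normSq a + normSq b)
      - normSq (conj a * d₁ + conj b * d₂) := by
  simp only [normSq_apply, mul_re, mul_im, sub_re, sub_im, add_re, add_im, conj_re, conj_im]
  ring

theorem eventually_hasFDerivAt_normSq_add_normSq {f₁ f₂ : ℂ → ℂ} {w : ℂ}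
    (h₁ : AnalyticAt ℂ f₁ w) (h₂ : AnalyticAt ℂ f₂ w) :
    ∀ᶠ z in 𝓝 w, HasFDerivAt (fun z => normSq (f₁ z) + normSq (f₂ z))
      (reMulCLM (2 * (conj (f₁ z) * deriv f₁ z + conj (f₂ z) * deriv f₂ z))) z := by
  filter_upwards [h₁.eventually_analyticAt, h₂.eventually_analyticAt] with z hz₁ hz₂
  have h := hz₁.differentiableAt.hasDerivAt.hasFDerivAt_normSq.add
    hz₂.differentiableAt.hasDerivAt.hasFDerivAt_normSq
  rwa [← map_add, ← mul_add] at h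

theorem laplacian_log_normSq_add_normSq {f₁ f₂ : ℂ → ℂ} {w : ℂ} (h₁ : AnalyticAt ℂ f₁ w)
    (h₂ : AnalyticAt ℂ f₂ w) (hw : ‖f₁ w‖ ^ 2 + ‖f₂ w‖ ^ 2 ≠ 0) :
    laplacian (fun z => Real.log (‖f₁ z‖ ^ 2 + ‖f₂ z‖ ^ 2)) w
      = 4 * ‖wronskian f₁ f₂ w‖ ^ 2 / (‖f₁ w‖ ^ 2 + ‖f₂ w‖ ^ 2) ^ 2 := by
  simp only [Complex.sq_norm, wronskian] at hw ⊢
  set S : ℂ → ℝ := fun z => normSq (f₁ z) + normSq (f₂ z) with hS_def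
  set A : ℂ → ℂ := fun z => conj (f₁ z) * deriv f₁ z + conj (f₂ z) * deriv f₂ z with hA_def
  have hS : ∀ᶠ z in 𝓝 w, HasFDerivAt S (reMulCLM (2 * A z)) z :=
    eventually_hasFDerivAt_normSq_add_normSq h₁ h₂
  have hlogS : ∀ᶠ z in 𝓝 w,
      HasFDerivAt (fun z => Real.log (S z)) (reMulCLM ((S z)⁻¹ • (2 * A z))) z := by
    filter_upwards [hS, hS.self_of_nhds.continuousAt.eventually_ne hw] with z hz hz0
    simpa only [map_smul] using hz.log hz0
  obtain ⟨L₁, hL₁, hL₁_apply⟩ := h₁.differentiableAt.hasDerivAt.hasFDerivAt_conj_mul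
    h₁.deriv.differentiableAt.hasDerivAt
  obtain ⟨L₂, hL₂, hL₂_apply⟩ := h₂.differentiableAt.hasDerivAt.hasFDerivAt_conj_mul
    h₂.deriv.differentiableAt.hasDerivAt
  have hB := ((hasDerivAt_inv hw).comp_hasFDerivAt w hS.self_of_nhds).smul
    ((hL₁.add hL₂).const_mul 2)
  -- `Δ log S = 4 ((|f₁'|² + |f₂'|²) S - |A|²) / S²`, and Lagrange's identity turns the
  -- numerator into `|W|²`.
  rw [laplacian_eq_of_hasFDerivAt hlogS hB, normSq_mul_sub_mul]
  simp only [add_apply, smul_apply, ContinuousLinearMap.smulRight_apply, hL₁_apply, hL₂_apply,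
    Pi.add_apply, Function.comp_apply, mul_one, reMulCLM_apply, hS_def, hA_def]
  generalize f₁ w = a, f₂ w = b, deriv f₁ w = d₁, deriv f₂ w = d₂, deriv (deriv f₁) w = e₁,
    deriv (deriv f₂) w = e₂ at hw ⊢
  have hA' : (conj d₁ * d₁ + conj a * e₁ + (conj d₂ * d₂ + conj b * e₂)).re
      - (conj (d₁ * I) * d₁ + conj a * (e₁ * I) + (conj (d₂ * I) * d₂ + conj b * (e₂ * I))).im
      = 2 * (normSq d₁ + normSq d₂) := by
    simp only [normSq_apply, mul_re, mul_im, add_re, add_im, conj_re, conj_im, I_re, I_im]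
    ring
  generalize conj d₁ * d₁ + conj a * e₁ + (conj d₂ * d₂ + conj b * e₂) = X₁,
    conj (d₁ * I) * d₁ + conj a * (e₁ * I) + (conj (d₂ * I) * d₂ + conj b * (e₂ * I)) = XI,
    conj a * d₁ + conj b * d₂ = c, normSq a + normSq b = s at hA' hw ⊢
  rw [normSq_apply c]
  simp only [real_smul, smul_eq_mul, add_re, add_im, mul_re, mul_im, ofReal_re, ofReal_im, I_re,
    I_im, re_ofNat, im_ofNat]
  field_simp
  linear_combination (2 * s) * hA'

theorem laplacian_log_div_normSq_add_normSq {φ₁ φ₂ θ₁ θ₂ : ℂ → ℂ} {w : ℂ}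
    (hφ₁ : AnalyticAt ℂ φ₁ w) (hφ₂ : AnalyticAt ℂ φ₂ w) (hθ₁ : AnalyticAt ℂ θ₁ w)
    (hθ₂ : AnalyticAt ℂ θ₂ w) (hφ : ‖φ₁ w‖ ^ 2 + ‖φ₂ w‖ ^ 2 ≠ 0)
    (hθ : ‖θ₁ w‖ ^ 2 + ‖θ₂ w‖ ^ 2 ≠ 0) :
    laplacian (fun z => Real.log ((‖φ₁ z‖ ^ 2 + ‖φ₂ z‖ ^ 2) / (‖θ₁ z‖ ^ 2 + ‖θ₂ z‖ ^ 2))) w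
      = 4 * ‖wronskian φ₁ φ₂ w‖ ^ 2 / (‖φ₁ w‖ ^ 2 + ‖φ₂ w‖ ^ 2) ^ 2
        - 4 * ‖wronskian θ₁ θ₂ w‖ ^ 2 / (‖θ₁ w‖ ^ 2 + ‖θ₂ w‖ ^ 2) ^ 2 := by
  have hsmooth {f₁ f₂ : ℂ → ℂ} (h₁ : AnalyticAt ℂ f₁ w) (h₂ : AnalyticAt ℂ f₂ w) :
      ContDiffAt ℝ 2 (fun z => ‖f₁ z‖ ^ 2 + ‖f₂ z‖ ^ 2) w :=
    ((h₁.contDiffAt.restrict_scalars ℝ).norm_sq ℝ).add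
      ((h₂.contDiffAt.restrict_scalars ℝ).norm_sq ℝ)
  rw [laplacian_log_div (hsmooth hφ₁ hφ₂) (hsmooth hθ₁ hθ₂) hφ hθ,
    laplacian_log_normSq_add_normSq hφ₁ hφ₂ hφ, laplacian_log_normSq_add_normSq hθ₁ hθ₂ hθ]

theorem not_forall_le_norm_mul_one_sub_sq {g : ℂ → ℂ} (hg : DifferentiableOn ℂ g (ball 0 1))
    {c : ℝ} (hc : 0 < c) : ¬ ∀ z ∈ ball (0 : ℂ) 1, c ≤ ‖g z‖ * (1 - ‖z‖ ^ 2) := by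
  intro h
  have hg0 : ∀ z ∈ ball (0 : ℂ) 1, g z ≠ 0 := fun z hz hz0 => by
    simpa [hz0, hc.not_ge] using h z hz
  have hinv : DifferentiableOn ℂ (fun z => (g z)⁻¹) (ball 0 1) := hg.inv hg0
  have hbound : ∀ r ∈ Set.Ioo (0 : ℝ) 1, ‖(g 0)⁻¹‖ ≤ (1 - r ^ 2) / c := by
    rintro r ⟨hr0, hr1⟩
    refine Complex.norm_le_of_forall_mem_frontier_norm_le isBounded_ball
      ((hinv.mono (closedBall_subset_ball hr1)).diffContOnCl_ball le_rfl) ?_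
      (subset_closure (mem_ball_self hr0))
    intro z hz
    rw [frontier_ball 0 hr0.ne', mem_sphere_zero_iff_norm] at hz
    have hz1 : z ∈ ball (0 : ℂ) 1 := mem_ball_zero_iff.2 (hz ▸ hr1)
    rw [norm_inv, ← hz, inv_le_iff_one_le_mul₀' (norm_pos_iff.2 (hg0 z hz1)), ← mul_div_assoc,
      one_le_div₀ hc]
    exact h z hz1
  have hlim : Tendsto (fun r : ℝ => (1 - r ^ 2) / c) (𝓝[<] 1) (𝓝 0) := by
    have h1 : Continuous fun r : ℝ => (1 - r ^ 2) / c := by fun_prop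
    simpa using (h1.tendsto 1).mono_left nhdsWithin_le_nhds
  have : ‖(g 0)⁻¹‖ ≤ 0 := ge_of_tendsto hlim (eventually_of_mem (Ioo_mem_nhdsLT one_pos) hbound)
  exact hg0 0 (mem_ball_self one_pos) (inv_eq_zero.1 (norm_le_zero_iff.1 this))

theorem hardy_not_isomorphic_to_bergman_general (α : ℝ) (hα : -1 < α)
    (θ₁ θ₂ φ₁ φ₂ : ℂ → ℂ)
    (hθ₁ : DifferentiableOn ℂ θ₁ (ball (0 : ℂ) 1))
    (hθ₂ : DifferentiableOn ℂ θ₂ (ball (0 : ℂ) 1))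
    (hφ₁ : DifferentiableOn ℂ φ₁ (ball (0 : ℂ) 1))
    (hφ₂ : DifferentiableOn ℂ φ₂ (ball (0 : ℂ) 1))
    (εθ : ℝ) (hεθ : 0 < εθ)
    (hθcorona : ∀ z ∈ ball (0 : ℂ) 1,
      εθ ≤ ‖θ₁ z‖ ^ 2 + ‖θ₂ z‖ ^ 2)
    (εφ : ℝ) (hεφ : 0 < εφ)
    (hφcorona : ∀ z ∈ ball (0 : ℂ) 1,
      εφ ≤ ‖φ₁ z‖ ^ 2 + ‖φ₂ z‖ ^ 2)
    (heq : ∀ w ∈ ball (0 : ℂ) 1,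
      (1 + α) / (1 - ‖w‖ ^ 2) ^ 2
        = (1 / 4) * laplacian (fun z =>
            Real.log ((‖φ₁ z‖ ^ 2 + ‖φ₂ z‖ ^ 2)
              / (‖θ₁ z‖ ^ 2 + ‖θ₂ z‖ ^ 2))) w) :
    False := by
  have hW : DifferentiableOn ℂ (wronskian φ₁ φ₂) (ball 0 1) :=
    (hφ₁.mul (hφ₂.analyticOnNhd isOpen_ball).deriv.differentiableOn).sub
      ((hφ₁.analyticOnNhd isOpen_ball).deriv.differentiableOn.mul hφ₂)
  refine not_forall_le_norm_mul_one_sub_sq hW (c := εφ * √(1 + α))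
    (mul_pos hεφ (Real.sqrt_pos.2 (by linarith))) fun w hw => ?_
  have hdisk : 0 < 1 - ‖w‖ ^ 2 := by
    have : ‖w‖ < 1 := mem_ball_zero_iff.1 hw
    nlinarith [norm_nonneg w]
  have hanalytic {f : ℂ → ℂ} (hf : DifferentiableOn ℂ f (ball 0 1)) : AnalyticAt ℂ f w :=
    hf.analyticAt (isOpen_ball.mem_nhds hw)
  have hφw := hεφ.trans_le (hφcorona w hw)
  have hθw := hεθ.trans_le (hθcorona w hw)
  have hcurv : (1 + α) / (1 - ‖w‖ ^ 2) ^ 2 ≤ ‖wronskian φ₁ φ₂ w‖ ^ 2 / εφ ^ 2 :=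
    calc (1 + α) / (1 - ‖w‖ ^ 2) ^ 2
        = ‖wronskian φ₁ φ₂ w‖ ^ 2 / (‖φ₁ w‖ ^ 2 + ‖φ₂ w‖ ^ 2) ^ 2
          - ‖wronskian θ₁ θ₂ w‖ ^ 2 / (‖θ₁ w‖ ^ 2 + ‖θ₂ w‖ ^ 2) ^ 2 := by
          rw [heq w hw, laplacian_log_div_normSq_add_normSq (hanalytic hφ₁) (hanalytic hφ₂)
            (hanalytic hθ₁) (hanalytic hθ₂) hφw.ne' hθw.ne']
          ring
      _ ≤ ‖wronskian φ₁ φ₂ w‖ ^ 2 / (‖φ₁ w‖ ^ 2 + ‖φ₂ w‖ ^ 2) ^ 2 := sub_le_self _ (by positivity)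
      _ ≤ ‖wronskian φ₁ φ₂ w‖ ^ 2 / εφ ^ 2 := by gcongr; exact hφcorona w hw
  rw [div_le_div_iff₀ (by positivity) (by positivity)] at hcurv
  refine (pow_le_pow_iff_left₀ (by positivity) (by positivity) two_ne_zero).1 ?_
  rw [mul_pow, mul_pow, Real.sq_sqrt (by linarith)]
  linarith

/-- `(H²)_Θ` can never be isomorphic to `(A²_α)_Φ`: there are no corona pairs
`{θ₁,θ₂}`, `{φ₁,φ₂}` and `α > -1` with
`(1+α)/(1-|w|²)² = (1/4)∇² log((|φ₁|²+|φ₂|²)/(|θ₁|²+|θ₂|²))` on the disk. -/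
theorem hardy_not_isomorphic_to_bergman (α : ℝ) (hα : -1 < α)
    (θ₁ θ₂ φ₁ φ₂ : ℂ → ℂ)
    (hθ₁ : DifferentiableOn ℂ θ₁ (ball (0 : ℂ) 1))
    (hθ₂ : DifferentiableOn ℂ θ₂ (ball (0 : ℂ) 1))
    (hφ₁ : DifferentiableOn ℂ φ₁ (ball (0 : ℂ) 1))
    (hφ₂ : DifferentiableOn ℂ φ₂ (ball (0 : ℂ) 1))
    (hθb : ∃ C : ℝ, ∀ z ∈ ball (0 : ℂ) 1,
      ‖θ₁ z‖ ≤ C ∧ ‖θ₂ z‖ ≤ C)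
    (hφb : ∃ C : ℝ, ∀ z ∈ ball (0 : ℂ) 1,
      ‖φ₁ z‖ ≤ C ∧ ‖φ₂ z‖ ≤ C)
    (εθ : ℝ) (hεθ : 0 < εθ)
    (hθcorona : ∀ z ∈ ball (0 : ℂ) 1,
      εθ ≤ ‖θ₁ z‖ ^ 2 + ‖θ₂ z‖ ^ 2)
    (εφ : ℝ) (hεφ : 0 < εφ)
    (hφcorona : ∀ z ∈ ball (0 : ℂ) 1,
      εφ ≤ ‖φ₁ z‖ ^ 2 + ‖φ₂ z‖ ^ 2)
    (heq : ∀ w ∈ ball (0 : ℂ) 1,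
      (1 + α) / (1 - ‖w‖ ^ 2) ^ 2
        = (1 / 4) * laplacian (fun z =>
            Real.log ((‖φ₁ z‖ ^ 2 + ‖φ₂ z‖ ^ 2)
              / (‖θ₁ z‖ ^ 2 + ‖θ₂ z‖ ^ 2))) w) :
    False :=
  hardy_not_isomorphic_to_bergman_general α hα θ₁ θ₂ φ₁ φ₂ hθ₁ hθ₂ hφ₁ hφ₂ εθ hεθ hθcorona εφ hεφ
    hφcorona heq
end
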